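/- arXiv:1505.07906 — 2 statements merged into one kernel-verified Lean document; each statement's English description precedes it below -/
import Mathlib

section
/- With K(n,r) = r^n e^{-r}/n!, one has lim_{n → ∞} ∫_0^∞ |K(n, y²)·2y − √(2/π)·e^{−2(√n − y)²}| dy = 0. -/
/-!
After the shift `y = √n + u`, the functions `φₙ(u) = K(n, (√n + u)²) · 2(√n + u)` (extended by
`0` for `u ≤ -√n`) are probability densities. Stirling's formula and
`log (1 + x) = x - x² / 2 + O(x³)` give `φₙ(u) → √(2/π) e^{-2u²}` pointwise, and the limit is again a
probability density, the centred Gaussian of variance `1/4`. Scheffé's lemma upgrades pointwise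
convergence of densities to `L¹` convergence, which is the claim after undoing the shift.
-/

open Real MeasureTheory Filter Set ProbabilityTheory Topology
open scoped Nat

theorem tendsto_integral_abs_sub_of_tendsto_integral {α ι : Type*} [MeasurableSpace α]
    {μ : Measure α} {l : Filter ι} [l.IsCountablyGenerated] {f : ι → α → ℝ} {g : α → ℝ}
    (hf : ∀ i, Integrable (f i) μ) (hg : Integrable g μ) (hf_nonneg : ∀ i, 0 ≤ᵐ[μ] f i)
    (h_lim : ∀ᵐ x ∂μ, Tendsto (fun i ↦ f i x) l (𝓝 (g x)))
    (h_int : Tendsto (fun i ↦ ∫ x, f i x ∂μ) l (𝓝 (∫ x, g x ∂μ))) :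
    Tendsto (fun i ↦ ∫ x, |f i x - g x| ∂μ) l (𝓝 0) := by
  have h_neg : ∀ i, Integrable (fun x ↦ max (g x - f i x) 0) μ := fun i ↦
    (hg.sub (hf i)).pos_part
  -- `(g - f i)⁺ ≤ |g|` because `f i ≥ 0`, so dominated convergence applies to the negative part
  have h_neg_lim : Tendsto (fun i ↦ ∫ x, max (g x - f i x) 0 ∂μ) l (𝓝 0) := by
    have h_bound : ∀ i, ∀ᵐ x ∂μ, ‖max (g x - f i x) 0‖ ≤ |g x| := fun i ↦ by
      filter_upwards [hf_nonneg i] with x hx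
      rw [norm_of_nonneg (le_max_right _ _)]
      exact max_le ((sub_le_self _ hx).trans (le_abs_self _)) (abs_nonneg _)
    have h_ptwise : ∀ᵐ x ∂μ, Tendsto (fun i ↦ max (g x - f i x) 0) l (𝓝 0) := by
      filter_upwards [h_lim] with x hx
      simpa using ((tendsto_const_nhds (x := g x)).sub hx).max
        (tendsto_const_nhds (x := (0 : ℝ)))
    simpa using tendsto_integral_filter_of_dominated_convergence (fun x ↦ |g x|)
      (.of_forall fun i ↦ (h_neg i).aestronglyMeasurable) (.of_forall h_bound) hg.abs h_ptwise
  have h_eq : ∀ i, ∫ x, |f i x - g x| ∂μ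
      = (∫ x, f i x ∂μ - ∫ x, g x ∂μ) + 2 * ∫ x, max (g x - f i x) 0 ∂μ := fun i ↦ by
    have h_sub : Integrable (fun x ↦ f i x - g x) μ := (hf i).sub hg
    rw [← integral_sub (hf i) hg, ← integral_const_mul,
      ← integral_add h_sub ((h_neg i).const_mul 2)]
    congr 1 with x
    rcases le_total (g x) (f i x) with h | h
    · rw [abs_of_nonneg (sub_nonneg.2 h), max_eq_right (sub_nonpos.2 h)]; ring
    · rw [abs_of_nonpos (sub_nonpos.2 h), max_eq_left (sub_nonneg.2 h)]; ring
  simpa [h_eq] using (h_int.sub_const (∫ x, g x ∂μ)).add (h_neg_lim.const_mul 2)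

lemma abs_log_one_add_sub_le {x : ℝ} (hx : |x| ≤ 1 / 2) :
    |log (1 + x) - x + x ^ 2 / 2| ≤ 2 * |x| ^ 3 := by
  have h := abs_log_sub_add_sum_range_le (x := -x) (by rw [abs_neg]; linarith) 2
  norm_num [Finset.sum_range_succ, abs_neg, sub_neg_eq_add] at h
  calc |log (1 + x) - x + x ^ 2 / 2| = |-x + x ^ 2 / 2 + log (1 + x)| := by ring_nf
    _ ≤ |x| ^ 3 / (1 - |x|) := h
    _ ≤ 2 * |x| ^ 3 := by
      rw [div_le_iff₀ (by linarith)]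
      nlinarith [pow_nonneg (abs_nonneg x) 3]

lemma tendsto_sqrt_natCast_atTop : Tendsto (fun n : ℕ ↦ √(n : ℝ)) atTop atTop :=
  tendsto_sqrt_atTop.comp tendsto_natCast_atTop_atTop

lemma tendsto_sq_mul_log_one_add_div_sub_mul (u : ℝ) :
    Tendsto (fun s : ℝ ↦ s ^ 2 * log (1 + u / s) - u * s) atTop (𝓝 (-u ^ 2 / 2)) := by
  rw [tendsto_iff_norm_sub_tendsto_zero]
  refine squeeze_zero' (.of_forall fun _ ↦ norm_nonneg _) ?_
    (tendsto_const_nhds.div_atTop tendsto_id : Tendsto (fun s : ℝ ↦ 2 * |u| ^ 3 / s) _ _)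
  filter_upwards [eventually_ge_atTop (2 * |u| + 1)] with s hs
  have hs0 : 0 < s := by linarith [abs_nonneg u]
  have hx : |u / s| ≤ 1 / 2 := by
    rw [abs_div, abs_of_pos hs0, div_le_iff₀ hs0]; linarith
  calc ‖s ^ 2 * log (1 + u / s) - u * s - -u ^ 2 / 2‖
      = s ^ 2 * |log (1 + u / s) - u / s + (u / s) ^ 2 / 2| := by
        rw [Real.norm_eq_abs, ← abs_of_pos (pow_pos hs0 2), ← abs_mul, abs_of_pos (pow_pos hs0 2)]
        congr 1
        field_simp
        ring
    _ ≤ s ^ 2 * (2 * |u / s| ^ 3) := by gcongr; exact abs_log_one_add_sub_le hx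
    _ = 2 * |u| ^ 3 / s := by
        rw [abs_div, abs_of_pos hs0]
        field_simp

/-- `K(n, y²) · 2y`, the density of `√R` for `R` with the Gamma density `K(n, ·)`. -/
noncomputable def sqrtGammaPDF (n : ℕ) (y : ℝ) : ℝ :=
  (y ^ 2) ^ n * exp (-(y ^ 2)) / n ! * (2 * y)

lemma sqrtGammaPDF_eq_rpow (n : ℕ) :
    sqrtGammaPDF n = fun y ↦ 2 / n ! * (y ^ (2 * n + 1 : ℝ) * exp (-y ^ (2 : ℝ))) := by
  ext y
  rw [show (2 * n + 1 : ℝ) = (2 * n + 1 : ℕ) by push_cast; ring, rpow_natCast, rpow_two,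
    sqrtGammaPDF, pow_succ y (2 * n), pow_mul]
  ring

lemma integrableOn_sqrtGammaPDF (n : ℕ) : IntegrableOn (sqrtGammaPDF n) (Ioi 0) := by
  rw [sqrtGammaPDF_eq_rpow]
  exact (integrableOn_rpow_mul_exp_neg_rpow (by linarith [n.cast_nonneg (α := ℝ)])
    two_pos).const_mul _

lemma integral_sqrtGammaPDF_eq_one (n : ℕ) : ∫ y in Ioi 0, sqrtGammaPDF n y = 1 := by
  rw [sqrtGammaPDF_eq_rpow, integral_const_mul,
    integral_rpow_mul_exp_neg_rpow two_pos (by linarith [n.cast_nonneg (α := ℝ)]),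
    show (2 * n + 1 + 1 : ℝ) / 2 = n + 1 by ring, Gamma_nat_eq_factorial]
  field_simp

lemma sqrtGammaPDF_nonneg (n : ℕ) {y : ℝ} (hy : 0 ≤ y) : 0 ≤ sqrtGammaPDF n y := by
  unfold sqrtGammaPDF
  positivity

lemma sqrtGammaPDF_sqrt_add_eq {n : ℕ} (hn : n ≠ 0) {u : ℝ} (hu : 0 < √n + u) :
    sqrtGammaPDF n (√n + u) = exp (2 * (n * log (1 + u / √n) - u * √n)) * exp (-u ^ 2)
      * (√2 * (1 + u / √n)) / Stirling.stirlingSeq n := by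
  set a := 1 + u / √n
  have hs0 : 0 < √(n : ℝ) := by positivity
  have hs : √(n : ℝ) ^ 2 = n := sq_sqrt n.cast_nonneg
  have hy : √n + u = √n * a := by simp only [a]; field_simp
  have ha : 0 < a := pos_of_mul_pos_right (hy ▸ hu) hs0.le
  have h_pow : ((√n + u) ^ 2) ^ n = n ^ n * a ^ (2 * n) := by
    rw [hy, mul_pow, hs, mul_pow, pow_mul]
  have h_exp : exp (-(√n + u) ^ 2) = exp (-u ^ 2) / (exp 1 ^ n * exp (2 * (u * √n))) := by
    rw [← exp_nat_mul, ← exp_add, ← exp_sub]; congr 1; linear_combination (-1 : ℝ) * hs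
  have h_log : exp (2 * (n * log a)) = a ^ (2 * n) := by
    rw [show 2 * (n * log a) = ((2 * n : ℕ) : ℝ) * log a by push_cast; ring, exp_nat_mul,
      exp_log ha]
  rw [sqrtGammaPDF, h_pow, h_exp, Stirling.stirlingSeq, mul_sub, exp_sub, h_log, hy,
    sqrt_mul zero_le_two, div_pow]
  field_simp
  rw [sq_sqrt zero_le_two]

lemma gaussianPDFReal_one_div_four (μ x : ℝ) :
    gaussianPDFReal μ (1 / 4) x = √(2 / π) * exp (-2 * (μ - x) ^ 2) := by
  rw [gaussianPDFReal]
  push_cast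
  congr 1
  · rw [show 2 * π * (1 / 4) = π / 2 by ring, ← sqrt_inv, inv_div]
  · congr 1; ring

lemma tendsto_sqrtGammaPDF_sqrt_add (u : ℝ) :
    Tendsto (fun n : ℕ ↦ sqrtGammaPDF n (√n + u)) atTop (𝓝 (gaussianPDFReal 0 (1 / 4) u)) := by
  have h_exp : Tendsto (fun n : ℕ ↦ exp (2 * (n * log (1 + u / √n) - u * √n))) atTop
      (𝓝 (exp (2 * (-u ^ 2 / 2)))) := by
    have h_log := (tendsto_sq_mul_log_one_add_div_sub_mul u).comp tendsto_sqrt_natCast_atTop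
    refine ((continuous_exp.tendsto _).comp (h_log.const_mul 2)).congr fun n ↦ ?_
    simp
  have h_ratio : Tendsto (fun n : ℕ ↦ 1 + u / √n) atTop (𝓝 (1 + 0)) :=
    tendsto_const_nhds.add (tendsto_const_nhds.div_atTop tendsto_sqrt_natCast_atTop)
  have h_lim := ((h_exp.mul_const (exp (-u ^ 2))).mul (h_ratio.const_mul √2)).div
    Stirling.tendsto_stirlingSeq_sqrt_pi (by positivity)
  rw [gaussianPDFReal_one_div_four]
  convert h_lim.congr' ?_ using 2
  · rw [sqrt_div zero_le_two, ← exp_add]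
    ring_nf
  · filter_upwards [eventually_ne_atTop 0, tendsto_sqrt_natCast_atTop.eventually_gt_atTop (-u)]
      with n hn hu
    exact (sqrtGammaPDF_sqrt_add_eq hn (by linarith)).symm

lemma integrable_indicator_sqrtGammaPDF (n : ℕ) :
    Integrable ((Ioi 0).indicator (sqrtGammaPDF n)) :=
  (integrable_indicator_iff measurableSet_Ioi).2 (integrableOn_sqrtGammaPDF n)

lemma tendsto_integral_abs_sqrtGammaPDF_sqrt_add_sub :
    Tendsto (fun n : ℕ ↦ ∫ u, |(Ioi 0).indicator (sqrtGammaPDF n) (√n + u)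
      - gaussianPDFReal 0 (1 / 4) u|) atTop (𝓝 0) := by
  refine tendsto_integral_abs_sub_of_tendsto_integral
    (fun n ↦ (integrable_indicator_sqrtGammaPDF n).comp_add_left _)
    (integrable_gaussianPDFReal _ _)
    (fun n ↦ .of_forall fun u ↦ indicator_nonneg (fun y hy ↦ sqrtGammaPDF_nonneg n hy.le) _)
    (.of_forall fun u ↦ ?_) ?_
  · refine (tendsto_sqrtGammaPDF_sqrt_add u).congr' ?_
    filter_upwards [tendsto_sqrt_natCast_atTop.eventually_gt_atTop (-u)] with n hn
    exact (indicator_of_mem (mem_Ioi.2 (by linarith)) _).symm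
  · have h_int (n : ℕ) : ∫ u, (Ioi 0).indicator (sqrtGammaPDF n) (√n + u) = 1 := by
      rw [integral_add_left_eq_self ((Ioi 0).indicator (sqrtGammaPDF n)),
        integral_indicator measurableSet_Ioi, integral_sqrtGammaPDF_eq_one]
    simp only [h_int, integral_gaussianPDFReal_eq_one 0 (by norm_num : (1 / 4 : NNReal) ≠ 0)]
    exact tendsto_const_nhds

lemma setIntegral_abs_sub_le_integral_abs_indicator_sub {α : Type*} [MeasurableSpace α]
    {μ : Measure α} {s : Set α} (hs : MeasurableSet s) {f g : α → ℝ}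
    (hfg : Integrable (fun x ↦ s.indicator f x - g x) μ) :
    ∫ x in s, |f x - g x| ∂μ ≤ ∫ x, |s.indicator f x - g x| ∂μ := calc
  ∫ x in s, |f x - g x| ∂μ = ∫ x in s, |s.indicator f x - g x| ∂μ :=
    setIntegral_congr_fun hs fun x hx ↦ by rw [indicator_of_mem hx]
  _ ≤ ∫ x, |s.indicator f x - g x| ∂μ :=
    setIntegral_le_integral hfg.abs (.of_forall fun _ ↦ abs_nonneg _)

theorem stmt_15 :
    Filter.Tendsto
      (fun n : ℕ => ∫ y in Set.Ioi (0 : ℝ),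
        |(y ^ 2) ^ n * Real.exp (-(y ^ 2)) / (Nat.factorial n) * (2 * y) -
          Real.sqrt (2 / Real.pi) * Real.exp (-2 * (Real.sqrt n - y) ^ 2)|)
      Filter.atTop (nhds 0) := by
  refine squeeze_zero (fun n ↦ integral_nonneg fun _ ↦ abs_nonneg _) (fun n ↦ ?_)
    tendsto_integral_abs_sqrtGammaPDF_sqrt_add_sub
  calc ∫ y in Ioi 0, |(y ^ 2) ^ n * exp (-(y ^ 2)) / n ! * (2 * y)
        - √(2 / π) * exp (-2 * (√n - y) ^ 2)|
      = ∫ y in Ioi 0, |sqrtGammaPDF n y - gaussianPDFReal √n (1 / 4) y| := by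
        simp only [gaussianPDFReal_one_div_four, sqrtGammaPDF]
    _ ≤ ∫ y, |(Ioi 0).indicator (sqrtGammaPDF n) y - gaussianPDFReal √n (1 / 4) y| :=
        setIntegral_abs_sub_le_integral_abs_indicator_sub measurableSet_Ioi
          ((integrable_indicator_sqrtGammaPDF n).sub (integrable_gaussianPDFReal _ _))
    _ = _ := by
        rw [← integral_add_left_eq_self _ √n]
        simp only [add_comm √(n : ℝ), gaussianPDFReal_add, sub_self]
end

section
/- Let a : [0,∞) → ℂ be bounded measurable with a(t) → 0 as t → ∞. Then γ_a(n) = (1/n!)·∫_0^∞ a(√r)·e^{-r}·r^n dr tends to 0 as n → ∞. -/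
/-! The weights `e^{-r} r^n / n!` on `(0, ∞)` are probability densities (Gamma integral) whose
mass escapes to infinity: they give `(0, M]` mass at most `M^{n+1} / n!`. Averaging a function
bounded by `C` against them, the part over `(0, M]` is at most `C M^{n+1} / n! → 0`, and the
part over `(M, ∞)` is small once the function is small beyond `M`. -/

open MeasureTheory Filter Set Topology Real
open scoped Nat

lemma integrableOn_exp_neg_mul_pow (n : ℕ) :
    IntegrableOn (fun x : ℝ => exp (-x) * x ^ n) (Ioi 0) := by
  refine (GammaIntegral_convergent (s := (n : ℝ) + 1) (by positivity)).congr_fun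
    (fun x _ => ?_) measurableSet_Ioi
  simp only [add_sub_cancel_right, rpow_natCast]

lemma integral_exp_neg_mul_pow (n : ℕ) :
    ∫ x in Ioi (0 : ℝ), exp (-x) * x ^ n = n ! := by
  rw [← Gamma_nat_eq_factorial, Gamma_eq_integral (by positivity)]
  refine setIntegral_congr_fun measurableSet_Ioi fun x _ => ?_
  rw [add_sub_cancel_right, rpow_natCast]

lemma exp_neg_mul_pow_le_pow {r M : ℝ} (hr : 0 ≤ r) (hrM : r ≤ M) (n : ℕ) :
    exp (-r) * r ^ n ≤ M ^ n :=
  (mul_le_of_le_one_left (pow_nonneg hr n) (exp_le_one_iff.mpr (neg_nonpos.mpr hr))).trans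
    (pow_le_pow_left₀ hr hrM n)

section

variable {E : Type*} [NormedAddCommGroup E] [NormedSpace ℝ E] {g : ℝ → E} {C : ℝ}

lemma norm_exp_neg_mul_pow_smul {r : ℝ} (hr : 0 < r) (n : ℕ) :
    ‖(exp (-r) * r ^ n) • g r‖ = exp (-r) * r ^ n * ‖g r‖ := by
  rw [norm_smul, Real.norm_of_nonneg (by positivity)]

lemma integrableOn_exp_neg_mul_pow_smul (hg : AEStronglyMeasurable g (volume.restrict (Ioi 0)))
    (hC : ∀ r ∈ Ioi (0 : ℝ), ‖g r‖ ≤ C) (n : ℕ) :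
    IntegrableOn (fun r => (exp (-r) * r ^ n) • g r) (Ioi 0) := by
  refine Integrable.mono' ((integrableOn_exp_neg_mul_pow n).mul_const C)
    (((continuous_exp.comp continuous_neg).mul (continuous_pow n)).aestronglyMeasurable.smul hg)
    ((ae_restrict_iff' measurableSet_Ioi).mpr (ae_of_all _ fun r hr => ?_))
  rw [norm_exp_neg_mul_pow_smul hr]
  exact mul_le_mul_of_nonneg_left (hC r hr) (mul_pos (exp_pos _) (pow_pos hr n)).le

lemma norm_setIntegral_Ioc_exp_neg_mul_pow_smul_le {M : ℝ} (hM : 0 ≤ M)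
    (hC : ∀ r ∈ Ioc 0 M, ‖g r‖ ≤ C) (n : ℕ) :
    ‖∫ r in Ioc 0 M, (exp (-r) * r ^ n) • g r‖ ≤ C * M ^ n * M := by
  refine (norm_setIntegral_le_of_norm_le_const measure_Ioc_lt_top fun r hr => ?_).trans_eq
    (by rw [volume_real_Ioc_of_le hM, sub_zero])
  rw [norm_exp_neg_mul_pow_smul hr.1, mul_comm C]
  exact mul_le_mul (exp_neg_mul_pow_le_pow hr.1.le hr.2 n) (hC r hr) (norm_nonneg _)
    (pow_nonneg hM n)

lemma norm_setIntegral_Ioi_exp_neg_mul_pow_smul_le {M ε : ℝ} (hM : 0 ≤ M)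
    (hε : ∀ r ∈ Ioi M, ‖g r‖ ≤ ε) (n : ℕ) :
    ‖∫ r in Ioi M, (exp (-r) * r ^ n) • g r‖ ≤ ε * n ! := by
  have hε0 : 0 ≤ ε := (norm_nonneg _).trans (hε (M + 1) (by simp))
  have hint : IntegrableOn (fun r : ℝ => exp (-r) * r ^ n) (Ioi M) :=
    (integrableOn_exp_neg_mul_pow n).mono_set (Ioi_subset_Ioi hM)
  calc ‖∫ r in Ioi M, (exp (-r) * r ^ n) • g r‖
      ≤ ∫ r in Ioi M, exp (-r) * r ^ n * ε := by
        refine norm_integral_le_of_norm_le (hint.mul_const ε)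
          ((ae_restrict_iff' measurableSet_Ioi).mpr (ae_of_all _ fun r hr => ?_))
        have hr0 : 0 < r := hM.trans_lt hr
        rw [norm_exp_neg_mul_pow_smul hr0]
        exact mul_le_mul_of_nonneg_left (hε r hr) (mul_pos (exp_pos _) (pow_pos hr0 n)).le
    _ ≤ ∫ r in Ioi 0, exp (-r) * r ^ n * ε :=
        setIntegral_mono_set ((integrableOn_exp_neg_mul_pow n).mul_const ε)
          ((ae_restrict_iff' measurableSet_Ioi).mpr (ae_of_all _ fun r (hr : 0 < r) => by
            positivity))
          (Ioi_subset_Ioi hM).eventuallyLE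
    _ = ε * n ! := by rw [integral_mul_const, integral_exp_neg_mul_pow, mul_comm]

theorem tendsto_inv_factorial_smul_integral_exp_neg_mul_pow_smul
    (hg : AEStronglyMeasurable g (volume.restrict (Ioi 0)))
    (hC : ∀ r ∈ Ioi (0 : ℝ), ‖g r‖ ≤ C) (h0 : Tendsto g atTop (𝓝 0)) :
    Tendsto (fun n : ℕ => (n ! : ℝ)⁻¹ • ∫ r in Ioi (0 : ℝ), (exp (-r) * r ^ n) • g r)
      atTop (𝓝 0) := by
  rw [NormedAddGroup.tendsto_nhds_zero]
  intro ε hε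
  obtain ⟨L, hL⟩ := eventually_atTop.mp
    ((tendsto_zero_iff_norm_tendsto_zero.mp h0).eventually (ge_mem_nhds (half_pos hε)))
  set M := max L 0
  have hM : 0 ≤ M := le_max_right _ _
  have hhead : Tendsto (fun n : ℕ => C * M * (M ^ n / n !)) atTop (𝓝 0) := by
    simpa using (FloorSemiring.tendsto_pow_div_factorial_atTop M).const_mul (C * M)
  filter_upwards [hhead.eventually_lt_const (half_pos hε)] with n hn
  have hint := integrableOn_exp_neg_mul_pow_smul hg hC n
  rw [← Ioc_union_Ioi_eq_Ioi hM, setIntegral_union (Ioc_disjoint_Ioi le_rfl) measurableSet_Ioi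
    (hint.mono_set Ioc_subset_Ioi_self) (hint.mono_set (Ioi_subset_Ioi hM))]
  calc ‖(n ! : ℝ)⁻¹ • ((∫ r in Ioc 0 M, (exp (-r) * r ^ n) • g r) +
        ∫ r in Ioi M, (exp (-r) * r ^ n) • g r)‖
      ≤ (n ! : ℝ)⁻¹ * (C * M ^ n * M + ε / 2 * n !) := by
        rw [norm_smul, norm_inv, Real.norm_natCast]
        gcongr
        refine (norm_add_le _ _).trans (add_le_add ?_ ?_)
        · exact norm_setIntegral_Ioc_exp_neg_mul_pow_smul_le hM (fun r hr => hC r hr.1) n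
        · exact norm_setIntegral_Ioi_exp_neg_mul_pow_smul_le hM
            (fun r hr => hL r ((le_max_left _ _).trans hr.le)) n
    _ = C * M * (M ^ n / n !) + ε / 2 := by field_simp
    _ < ε := by linarith

end

theorem stmt_18 (a : ℝ → ℂ) (hm : Measurable a)
    (hb : ∃ C : ℝ, ∀ r : ℝ, 0 ≤ r → ‖a r‖ ≤ C)
    (h0 : Filter.Tendsto a Filter.atTop (nhds 0)) :
    Filter.Tendsto
      (fun n : ℕ => (Nat.factorial n : ℂ)⁻¹ *
        ∫ r in Set.Ioi (0 : ℝ), a (Real.sqrt r) * ((Real.exp (-r) * r ^ n : ℝ) : ℂ))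
      Filter.atTop (nhds 0) := by
  obtain ⟨C, hC⟩ := hb
  have key := tendsto_inv_factorial_smul_integral_exp_neg_mul_pow_smul
    (hm.comp continuous_sqrt.measurable).aestronglyMeasurable
    (fun r _ => hC (√r) (sqrt_nonneg r)) (h0.comp tendsto_sqrt_atTop)
  refine key.congr fun n => ?_
  simp only [Function.comp_apply, Complex.real_smul, mul_comm, Complex.ofReal_inv,
    Complex.ofReal_natCast]
end
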